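/- arXiv:1311.3929 — 3 statements merged into one kernel-verified Lean document; each statement's English description precedes it below -/
import Mathlib

section
/- Let N be a finite network based on a finite connected simple graph X with vertex set V and capacity function c. Then there exist a finite tree T (a connected acyclic simple graph), a capacity function c' assigning a positive integer to each edge of T, and an injective map ν : V → VT such that: (1) for all distinct vertices s, t of X, the minimum of c(A) over all cuts A of X with s ∈ A and t ∈ A* equals the minimum of c'(B) over all cuts B of T with νs ∈ B and νt ∈ B*; and (2) for every edge e' of T there are distinct vertices s, t of X such that e' lies on the unique path in T from νs to νt and c'(e') equals the minimum of c(A) over all cuts A of X separating s and t. -/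
open Classical

/-- The set of edges of `G` with one endpoint in `A` and one in the complement of `A`. -/
def cutEdges {V : Type*} (G : SimpleGraph V) (A : Set V) : Set (Sym2 V) :=
  {e | e ∈ G.edgeSet ∧ ∃ u v, e = s(u, v) ∧ u ∈ A ∧ v ∉ A}

/-- The capacity of a cut: the sum of the capacities of the edges across it. -/
noncomputable def cutCap {V : Type*} (G : SimpleGraph V) (c : Sym2 V → ℕ) (A : Set V) : ℕ :=
  ∑ᶠ e ∈ cutEdges G A, c e

/-- A cut in a finite graph: a nonempty proper subset of the vertices. -/
def IsCut {V : Type*} (A : Set V) : Prop :=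
  A ≠ ∅ ∧ A ≠ Set.univ

/-!
The minimum cut function `λ` of a network satisfies `min (λ s t) (λ t u) ≤ λ s u`: a minimum
`s`–`u` cut puts `t` on the other side of `s` or of `u`. Every symmetric function with this
property is the minimum cut function of a tree. Order the vertices and attach every vertex `a`
but the first to its parent `p a`, the earlier vertex `b` with the largest `λ a b`, giving the
edge `{a, p a}` capacity `λ a (p a)`. By strong induction on the later of two vertices `i, j`,
every set separating `i` and `j` is crossed by a tree edge of capacity at least `λ i j`, and
the subtree below some vertex `a` separates `i` and `j` with `λ a (p a) = λ i j`; that subtree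
is a cut of the tree whose only edge is `{a, p a}`.
-/

section Cuts

variable {V : Type*} {G : SimpleGraph V} {c : Sym2 V → ℕ} {A : Set V}

lemma cutEdges_compl : cutEdges G Aᶜ = cutEdges G A := by
  ext e
  constructor <;> rintro ⟨hE, u, v, rfl, hu, hv⟩ <;>
    exact ⟨hE, v, u, Sym2.eq_swap, by simpa using hv, by simpa using hu⟩

lemma cutCap_compl : cutCap G c Aᶜ = cutCap G c A := by
  rw [cutCap, cutCap, cutEdges_compl]

lemma IsCut.compl (h : IsCut A) : IsCut Aᶜ :=
  ⟨by simpa [Set.compl_empty_iff] using h.2, by simpa [Set.compl_univ_iff] using h.1⟩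

lemma mem_cutEdges_of_adj {u v : V} (h : G.Adj u v) (huv : u ∈ A ↔ v ∉ A) :
    s(u, v) ∈ cutEdges G A := by
  by_cases hu : u ∈ A
  · exact ⟨G.mem_edgeSet.2 h, u, v, rfl, hu, huv.1 hu⟩
  · rw [← cutEdges_compl]
    exact ⟨G.mem_edgeSet.2 h, u, v, rfl, hu, Set.notMem_compl_iff.2 (not_not.1 (mt huv.2 hu))⟩

lemma le_cutCap [Finite V] {e : Sym2 V} (he : e ∈ cutEdges G A) : c e ≤ cutCap G c A := by
  rw [cutCap, finsum_mem_eq_finite_toFinset_sum _ (Set.toFinite _)]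
  exact Finset.single_le_sum (fun _ _ => Nat.zero_le _) (by simpa using he)

lemma isBridge_of_cutEdges_subset {u v : V} (hu : u ∈ A) (hv : v ∉ A)
    (h : cutEdges G A ⊆ {s(u, v)}) : G.IsBridge s(u, v) := by
  rintro ⟨q⟩
  obtain ⟨d, -, hd₁, hd₂⟩ := q.exists_boundary_dart A hu hv
  obtain ⟨hadj, hd⟩ := SimpleGraph.deleteEdges_adj.1 d.adj
  exact hd (h (mem_cutEdges_of_adj hadj (iff_of_true hd₁ hd₂)))

end Cuts

section MinCut

variable {V : Type*} {G : SimpleGraph V} {c : Sym2 V → ℕ} {s t u : V}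

/-- Junk value `0` when `s = t`, as then no cut separates `s` from `t`. -/
noncomputable def minCut (G : SimpleGraph V) (c : Sym2 V → ℕ) (s t : V) : ℕ :=
  sInf {k : ℕ | ∃ A : Set V, IsCut A ∧ s ∈ A ∧ t ∉ A ∧ cutCap G c A = k}

lemma minCut_le {A : Set V} (hA : IsCut A) (hs : s ∈ A) (ht : t ∉ A) :
    minCut G c s t ≤ cutCap G c A :=
  Nat.sInf_le ⟨A, hA, hs, ht, rfl⟩

lemma exists_cutCap_eq_minCut (hst : s ≠ t) :
    ∃ A : Set V, IsCut A ∧ s ∈ A ∧ t ∉ A ∧ cutCap G c A = minCut G c s t := by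
  have hsingleton : IsCut ({s} : Set V) :=
    ⟨Set.singleton_ne_empty s, fun h => hst (Set.mem_singleton_iff.1 (h ▸ Set.mem_univ t)).symm⟩
  have hne : {k : ℕ | ∃ A : Set V, IsCut A ∧ s ∈ A ∧ t ∉ A ∧ cutCap G c A = k}.Nonempty :=
    ⟨_, {s}, hsingleton, rfl, fun h => hst h.symm, rfl⟩
  exact Nat.sInf_mem hne

lemma minCut_eq_of_forall_le {k : ℕ} (hle : ∀ A : Set V, s ∈ A → t ∉ A → k ≤ cutCap G c A)
    (hk : ∃ A : Set V, IsCut A ∧ s ∈ A ∧ t ∉ A ∧ cutCap G c A = k) : minCut G c s t = k := by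
  obtain ⟨A, hA, hs, ht, rfl⟩ := hk
  refine le_antisymm (minCut_le hA hs ht) (le_csInf ⟨_, A, hA, hs, ht, rfl⟩ ?_)
  rintro _ ⟨B, -, hsB, htB, rfl⟩
  exact hle B hsB htB

lemma sInf_cutCap_separating_eq_minCut :
    sInf {k : ℕ | ∃ A : Set V, IsCut A ∧ ((s ∈ A ∧ t ∉ A) ∨ (t ∈ A ∧ s ∉ A)) ∧
      cutCap G c A = k} = minCut G c s t := by
  unfold minCut
  congr 1
  ext k
  constructor
  · rintro ⟨A, hA, ⟨hs, ht⟩ | ⟨ht, hs⟩, rfl⟩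
    · exact ⟨A, hA, hs, ht, rfl⟩
    · exact ⟨Aᶜ, hA.compl, hs, Set.notMem_compl_iff.2 ht, cutCap_compl⟩
  · rintro ⟨A, hA, hs, ht, rfl⟩
    exact ⟨A, hA, Or.inl ⟨hs, ht⟩, rfl⟩

lemma minCut_comm (s t : V) : minCut G c s t = minCut G c t s := by
  unfold minCut
  congr 1
  ext k
  constructor <;> rintro ⟨A, hA, hs, ht, rfl⟩ <;>
    exact ⟨Aᶜ, hA.compl, ht, Set.notMem_compl_iff.2 hs, cutCap_compl⟩

lemma min_minCut_le (hsu : s ≠ u) : min (minCut G c s t) (minCut G c t u) ≤ minCut G c s u := by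
  obtain ⟨A, hA, hs, hu, hcap⟩ := exists_cutCap_eq_minCut (G := G) (c := c) hsu
  rw [← hcap]
  by_cases ht : t ∈ A
  · exact (min_le_right _ _).trans (minCut_le hA ht hu)
  · exact (min_le_left _ _).trans (minCut_le hA hs ht)

lemma minCut_pos [Finite V] (hG : G.Preconnected) (hc : ∀ e ∈ G.edgeSet, 0 < c e)
    (hst : s ≠ t) : 0 < minCut G c s t := by
  obtain ⟨A, hA, hs, ht, hcap⟩ := exists_cutCap_eq_minCut (G := G) (c := c) hst
  obtain ⟨d, -, hd₁, hd₂⟩ := (hG s t).some.exists_boundary_dart A hs ht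
  rw [← hcap]
  exact (hc _ (G.mem_edgeSet.2 d.adj)).trans_le
    (le_cutCap (mem_cutEdges_of_adj d.adj (iff_of_true hd₁ hd₂)))

end MinCut

lemma eq_of_lt_of_min_le {α : Type*} {Λ : α → α → ℕ} (hΛ : ∀ i j, Λ i j = Λ j i)
    (htri : ∀ i j k, i ≠ k → min (Λ i j) (Λ j k) ≤ Λ i k) {i j k : α} (hij : i ≠ j)
    (hik : i ≠ k) (h : Λ i j < Λ j k) : Λ i k = Λ i j := by
  refine le_antisymm ?_ (by simpa [min_eq_left h.le] using htri i j k hik)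
  have := htri i k j hij
  rw [hΛ k j, min_le_iff] at this
  exact this.resolve_right h.not_ge

theorem symm_pair_induction {α : Type*} [LinearOrder α] [WellFoundedLT α] {Q : α → α → Prop}
    (hQ : ∀ i j, Q i j → Q j i)
    (step : ∀ j, (∀ i k, i < j → k < j → i ≠ k → Q i k) → ∀ i < j, Q i j)
    {i j : α} (hij : i ≠ j) : Q i j := by
  have key : ∀ j, ∀ i < j, Q i j := by
    intro j
    induction j using WellFoundedLT.induction with
    | _ j ih =>
      refine step j fun i k hi hk hik => ?_
      rcases hik.lt_or_gt with h | h
      · exact ih k hk i h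
      · exact hQ _ _ (ih i hi k h)
  rcases hij.lt_or_gt with h | h
  · exact key j i h
  · exact hQ _ _ (key i j h)

lemma SimpleGraph.IsAcyclic.mem_edges_of_adj {V : Type*} {G : SimpleGraph V} (hG : G.IsAcyclic)
    {a b : V} (h : G.Adj a b) (q : G.Walk a b) : s(a, b) ∈ q.edges :=
  SimpleGraph.isBridge_iff_forall_walk_mem_edges.1
    (SimpleGraph.isAcyclic_iff_forall_adj_isBridge.1 hG h) q

section ParentGraph

variable {α : Type*}

def parentGraph (p : α → α) : SimpleGraph α := SimpleGraph.fromRel fun a b => p a = b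

def descendants (p : α → α) (a : α) : Set α := {x | ∃ k, p^[k] x = a}

variable {p : α → α}

lemma parentGraph_adj {a b : α} : (parentGraph p).Adj a b ↔ a ≠ b ∧ (p a = b ∨ p b = a) :=
  SimpleGraph.fromRel_adj _ _ _

lemma mem_descendants_self (a : α) : a ∈ descendants p a := ⟨0, rfl⟩

lemma mem_descendants_iff_parent {a x : α} (hxa : x ≠ a) :
    x ∈ descendants p a ↔ p x ∈ descendants p a := by
  constructor
  · rintro ⟨_ | k, hk⟩
    · exact absurd hk hxa
    · exact ⟨k, by rwa [Function.iterate_succ_apply] at hk⟩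
  · rintro ⟨k, hk⟩
    exact ⟨k + 1, by rwa [Function.iterate_succ_apply]⟩

variable [LinearOrder α]

lemma le_of_mem_descendants (hle : ∀ a, p a ≤ a) {a x : α} (hx : x ∈ descendants p a) :
    a ≤ x := by
  obtain ⟨k, rfl⟩ := hx
  induction k generalizing x with
  | zero => exact le_rfl
  | succ k ih =>
    rw [Function.iterate_succ_apply]
    exact (ih (x := p x)).trans (hle x)

variable [OrderBot α]

lemma parent_notMem_descendants (hle : ∀ a, p a ≤ a) (hlt : ∀ a, a ≠ ⊥ → p a < a) {a : α}
    (ha : a ≠ ⊥) : p a ∉ descendants p a :=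
  fun h => (hlt a ha).not_ge (le_of_mem_descendants hle h)

lemma parentGraph_adj_parent (hlt : ∀ a, a ≠ ⊥ → p a < a) {a : α} (ha : a ≠ ⊥) :
    (parentGraph p).Adj a (p a) :=
  parentGraph_adj.2 ⟨(hlt a ha).ne', Or.inl rfl⟩

lemma cutEdges_descendants (hle : ∀ a, p a ≤ a) (hlt : ∀ a, a ≠ ⊥ → p a < a) {a : α}
    (ha : a ≠ ⊥) : cutEdges (parentGraph p) (descendants p a) = {s(a, p a)} := by
  ext e
  constructor
  · rintro ⟨he, u, v, rfl, hu, hv⟩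
    obtain ⟨-, rfl | rfl⟩ := parentGraph_adj.1 ((parentGraph p).mem_edgeSet.1 he)
    · rcases eq_or_ne u a with rfl | hua
      · rfl
      · exact absurd ((mem_descendants_iff_parent hua).1 hu) hv
    · have hva : v ≠ a := by
        rintro rfl
        exact hv (mem_descendants_self v)
      exact absurd ((mem_descendants_iff_parent hva).2 hu) hv
  · rintro rfl
    exact mem_cutEdges_of_adj (parentGraph_adj_parent hlt ha)
      (iff_of_true (mem_descendants_self a) (parent_notMem_descendants hle hlt ha))

lemma isCut_descendants (hle : ∀ a, p a ≤ a) {a : α} (ha : a ≠ ⊥) :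
    IsCut (descendants p a) :=
  ⟨Set.nonempty_iff_ne_empty.1 ⟨a, mem_descendants_self a⟩,
    fun h => ha (le_bot_iff.1 (le_of_mem_descendants hle (h ▸ Set.mem_univ ⊥)))⟩

lemma cutCap_descendants (hle : ∀ a, p a ≤ a) (hlt : ∀ a, a ≠ ⊥ → p a < a) (c : Sym2 α → ℕ)
    {a : α} (ha : a ≠ ⊥) : cutCap (parentGraph p) c (descendants p a) = c s(a, p a) := by
  rw [cutCap, cutEdges_descendants hle hlt ha, finsum_mem_singleton]

lemma reachable_bot_parentGraph [WellFoundedLT α] (hlt : ∀ a, a ≠ ⊥ → p a < a) (a : α) :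
    (parentGraph p).Reachable a ⊥ := by
  induction a using WellFoundedLT.induction with
  | _ a ih =>
    rcases eq_or_ne a ⊥ with rfl | ha
    · rfl
    · exact (parentGraph_adj_parent hlt ha).reachable.trans (ih _ (hlt a ha))

lemma isTree_parentGraph [WellFoundedLT α] (hle : ∀ a, p a ≤ a)
    (hlt : ∀ a, a ≠ ⊥ → p a < a) : (parentGraph p).IsTree := by
  refine ⟨⟨fun a b => (reachable_bot_parentGraph hlt a).trans
    (reachable_bot_parentGraph hlt b).symm⟩, ?_⟩
  have hbridge : ∀ a, a ≠ ⊥ → (parentGraph p).IsBridge s(a, p a) := fun a ha =>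
    isBridge_of_cutEdges_subset (mem_descendants_self a) (parent_notMem_descendants hle hlt ha)
      (cutEdges_descendants hle hlt ha).subset
  have hne_bot : ∀ a, a ≠ p a → a ≠ ⊥ := by
    rintro a hne rfl
    exact hne (le_bot_iff.1 (hle ⊥)).symm
  rw [SimpleGraph.isAcyclic_iff_forall_adj_isBridge]
  intro u v huv
  obtain ⟨hne, rfl | rfl⟩ := parentGraph_adj.1 huv
  · exact hbridge u (hne_bot u hne)
  · rw [Sym2.eq_swap]
    exact hbridge v (hne_bot v hne.symm)

end ParentGraph

section FlowTree

variable {α : Type*} [LinearOrder α] [OrderBot α] {Λ : α → α → ℕ} {p : α → α}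

lemma exists_parent_maximizing [Finite α] (Λ : α → α → ℕ) :
    ∃ p : α → α, (∀ a, p a ≤ a) ∧ (∀ a, a ≠ ⊥ → p a < a) ∧
      ∀ a j, j < a → Λ a j ≤ Λ a (p a) := by
  have h : ∀ a : α, ∃ b ≤ a, (a ≠ ⊥ → b < a) ∧ ∀ j < a, Λ a j ≤ Λ a b := by
    intro a
    rcases eq_or_ne a ⊥ with rfl | ha
    · exact ⟨⊥, le_rfl, fun h => absurd rfl h, fun j hj => absurd hj not_lt_bot⟩
    · obtain ⟨b, hb, hmax⟩ := Set.exists_max_image (Set.Iio a) (Λ a) (Set.toFinite _)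
        ⟨⊥, bot_lt_iff_ne_bot.2 ha⟩
      exact ⟨b, hb.le, fun _ => hb, hmax⟩
  choose p hle hlt hmax using h
  exact ⟨p, hle, hlt, hmax⟩

variable [WellFoundedLT α]

lemma le_cutCap_parentGraph [Finite α] (hΛ : ∀ i j, Λ i j = Λ j i)
    (htri : ∀ i j k, i ≠ k → min (Λ i j) (Λ j k) ≤ Λ i k) (hlt : ∀ a, a ≠ ⊥ → p a < a)
    (hmax : ∀ a j, j < a → Λ a j ≤ Λ a (p a)) {i j : α} (hij : i ≠ j) {B : Set α}
    (hB : i ∈ B ↔ j ∉ B) : Λ i j ≤ cutCap (parentGraph p) (Sym2.lift ⟨Λ, hΛ⟩) B := by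
  refine symm_pair_induction (Q := fun i j => ∀ B : Set α, (i ∈ B ↔ j ∉ B) →
    Λ i j ≤ cutCap (parentGraph p) (Sym2.lift ⟨Λ, hΛ⟩) B) ?_ ?_ hij B hB
  · intro i j h B hB
    rw [hΛ]
    exact h B (by tauto)
  · intro j ih i hij B hB
    have hj : j ≠ ⊥ := ne_bot_of_gt hij
    have hji : Λ i j ≤ Λ j (p j) := hΛ i j ▸ hmax j i hij
    by_cases hw : j ∈ B ↔ p j ∉ B
    · exact hji.trans (le_cutCap (c := Sym2.lift ⟨Λ, hΛ⟩) (mem_cutEdges_of_adj (parentGraph_adj_parent hlt hj) hw))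
    · have hiw : i ∈ B ↔ p j ∉ B := by tauto
      have hne : i ≠ p j := by
        rintro rfl
        exact iff_not_self hiw
      calc Λ i j ≤ Λ i (p j) := by simpa [min_eq_left hji] using htri i j (p j) hne
        _ ≤ _ := ih i (p j) hij (hlt j hj) hne B hiw

lemma exists_descendants_separating (hΛ : ∀ i j, Λ i j = Λ j i)
    (htri : ∀ i j k, i ≠ k → min (Λ i j) (Λ j k) ≤ Λ i k) (hle : ∀ a, p a ≤ a) (hlt : ∀ a, a ≠ ⊥ → p a < a)
    (hmax : ∀ a j, j < a → Λ a j ≤ Λ a (p a)) {i j : α} (hij : i ≠ j) :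
    ∃ a, a ≠ ⊥ ∧ Λ a (p a) = Λ i j ∧ (i ∈ descendants p a ↔ j ∉ descendants p a) := by
  refine symm_pair_induction (Q := fun i j => ∃ a, a ≠ ⊥ ∧ Λ a (p a) = Λ i j ∧
    (i ∈ descendants p a ↔ j ∉ descendants p a)) ?_ ?_ hij
  · rintro i j ⟨a, ha, heq, hsep⟩
    exact ⟨a, ha, heq.trans (hΛ i j), by tauto⟩
  · intro j ih i hij
    have hj : j ≠ ⊥ := ne_bot_of_gt hij
    have hi_notMem : i ∉ descendants p j := fun h => (le_of_mem_descendants hle h).not_gt hij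
    have hji : Λ i j ≤ Λ j (p j) := hΛ i j ▸ hmax j i hij
    rcases hji.eq_or_lt with heq | hlt'
    · exact ⟨j, hj, heq.symm, iff_of_false hi_notMem (not_not.2 (mem_descendants_self j))⟩
    · have hne : i ≠ p j := by
        rintro rfl
        exact (hΛ (p j) j ▸ hlt').false
      obtain ⟨a, ha, heq, hsep⟩ := ih i (p j) hij (hlt j hj) hne
      have hja : j ≠ a := by
        rintro rfl
        exact hi_notMem (hsep.2 (parent_notMem_descendants hle hlt hj))
      refine ⟨a, ha, heq.trans (eq_of_lt_of_min_le hΛ htri hij.ne hne hlt'), ?_⟩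
      rwa [mem_descendants_iff_parent hja]

theorem minCut_parentGraph [Finite α] (hΛ : ∀ i j, Λ i j = Λ j i)
    (htri : ∀ i j k, i ≠ k → min (Λ i j) (Λ j k) ≤ Λ i k) (hle : ∀ a, p a ≤ a) (hlt : ∀ a, a ≠ ⊥ → p a < a)
    (hmax : ∀ a j, j < a → Λ a j ≤ Λ a (p a)) {i j : α} (hij : i ≠ j) :
    minCut (parentGraph p) (Sym2.lift ⟨Λ, hΛ⟩) i j = Λ i j := by
  refine minCut_eq_of_forall_le
    (fun B hi hj => le_cutCap_parentGraph hΛ htri hlt hmax hij (iff_of_true hi hj)) ?_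
  obtain ⟨a, ha, heq, hsep⟩ := exists_descendants_separating hΛ htri hle hlt hmax hij
  have hcap := (cutCap_descendants hle hlt (Sym2.lift ⟨Λ, hΛ⟩) ha).trans heq
  by_cases hi : i ∈ descendants p a
  · exact ⟨_, isCut_descendants hle ha, hi, hsep.1 hi, hcap⟩
  · exact ⟨_, (isCut_descendants hle ha).compl, hi,
      Set.notMem_compl_iff.2 (not_not.1 (mt hsep.2 hi)), cutCap_compl.trans hcap⟩

end FlowTree

/-- For every finite network there is a network based on a tree `T`, with positive
integer capacities, and an injective map `ν` from the vertices of `X` to those of `T`,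
such that minimal cut capacities between pairs of vertices agree in `X` and `T`, and
every edge of `T` realizes the minimal cut capacity between some pair of vertices of
`X` whose images it separates. -/
theorem structure_tree_for_finite_network {V : Type*} [Fintype V] (G : SimpleGraph V)
    (hG : G.Connected) (c : Sym2 V → ℕ) (hc : ∀ e ∈ G.edgeSet, 0 < c e) :
    ∃ (W : Type) (_ : Fintype W) (T : SimpleGraph W) (c' : Sym2 W → ℕ) (ν : V → W),
      T.IsTree ∧
      (∀ e ∈ T.edgeSet, 0 < c' e) ∧
      Function.Injective ν ∧
      (∀ s t : V, s ≠ t →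
        sInf {k : ℕ | ∃ A : Set V, IsCut A ∧ s ∈ A ∧ t ∉ A ∧ cutCap G c A = k} =
          sInf {k : ℕ | ∃ B : Set W, IsCut B ∧ ν s ∈ B ∧ ν t ∉ B ∧ cutCap T c' B = k}) ∧
      (∀ e ∈ T.edgeSet, ∃ s t : V, s ≠ t ∧
        (∀ p : T.Walk (ν s) (ν t), p.IsPath → e ∈ p.edges) ∧
        c' e = sInf {k : ℕ | ∃ A : Set V, IsCut A ∧
          ((s ∈ A ∧ t ∉ A) ∨ (t ∈ A ∧ s ∉ A)) ∧ cutCap G c A = k}) := by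
  have : Nonempty V := hG.nonempty
  have : NeZero (Fintype.card V) := ⟨Fintype.card_ne_zero⟩
  let e := Fintype.equivFin V
  let Λ i j := minCut G c (e.symm i) (e.symm j)
  have hΛ : ∀ i j, Λ i j = Λ j i := fun _ _ => minCut_comm _ _
  have htri : ∀ i j k, i ≠ k → min (Λ i j) (Λ j k) ≤ Λ i k :=
    fun _ _ _ hik => min_minCut_le (e.symm.injective.ne hik)
  obtain ⟨p, hle, hlt, hmax⟩ := exists_parent_maximizing Λ
  have htree := isTree_parentGraph hle hlt
  refine ⟨_, inferInstance, parentGraph p, Sym2.lift ⟨Λ, hΛ⟩, e, htree, ?_, e.injective, ?_, ?_⟩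
  · rintro ⟨a, b⟩ hab
    exact minCut_pos hG.preconnected hc (e.symm.injective.ne ((parentGraph p).ne_of_adj hab))
  · intro s t hst
    have h := minCut_parentGraph hΛ htri hle hlt hmax (e.injective.ne hst)
    simp only [Λ, Equiv.symm_apply_apply] at h
    exact h.symm
  · intro f hf
    induction f using Sym2.ind with
    | _ a b =>
      refine ⟨e.symm a, e.symm b, e.symm.injective.ne ((parentGraph p).ne_of_adj hf), ?_,
        sInf_cutCap_separating_eq_minCut.symm⟩
      rw [e.apply_symm_apply, e.apply_symm_apply]
      exact fun q _ => htree.isAcyclic.mem_edges_of_adj hf q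
end

section
/- Let V be a set and let E be a finite set of cuts of V (nonempty proper subsets) such that A ∈ E implies A* ∈ E, and E is nested. Let VT be the set of functions α : E → {0,1} such that for every A ∈ E exactly one of α(A), α(A*) equals 1, and such that α(A) = 1 and A ⊆ B with B ∈ E imply α(B) = 1. Define a simple graph T on VT by joining α and β when α ≠ β and there is some A ∈ E with α(C) = β(C) for every C ∈ E other than A and A*. Then T is a tree, and for every pair {A, A*} with A ∈ E there is exactly one edge {α, β} of T such that α and β differ precisely on A and A*. -/
open Classical

/-- Two subsets of `V` are nested if at least one of the four corners is empty. -/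
def Nested {V : Type*} (A B : Set V) : Prop :=
  A ∩ B = ∅ ∨ A ∩ Bᶜ = ∅ ∨ Aᶜ ∩ B = ∅ ∨ Aᶜ ∩ Bᶜ = ∅

/-- The vertices of the structure tree: subsets `α ⊆ E` (recording the cuts on which the
`{0,1}`-valued function takes the value `1`) such that for every `A ∈ E` exactly one of
`A`, `Aᶜ` is in `α`, and such that `A ∈ α`, `A ⊆ B`, `B ∈ E` imply `B ∈ α`. -/
def IsTreeVertex {V : Type*} (E : Set (Set V)) (α : Set (Set V)) : Prop :=
  α ⊆ E ∧ (∀ A ∈ E, (A ∈ α ↔ Aᶜ ∉ α)) ∧ (∀ A ∈ α, ∀ B ∈ E, A ⊆ B → B ∈ α)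

/-- The structure tree on the vertex set above: `α` and `β` are joined when they are
distinct and agree on every `C ∈ E` other than some `A` and `Aᶜ` with `A ∈ E`. -/
def structureTree {V : Type*} (E : Set (Set V)) :
    SimpleGraph {α : Set (Set V) // IsTreeVertex E α} where
  Adj α β := α ≠ β ∧ ∃ A ∈ E, ∀ C ∈ E, C ≠ A → C ≠ Aᶜ → (C ∈ α.val ↔ C ∈ β.val)
  symm := by
    constructor
    rintro α β ⟨hne, A, hA, h⟩
    exact ⟨hne.symm, A, hA, fun C hC h1 h2 => (h C hC h1 h2).symm⟩
  loopless := by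
    constructor
    rintro α ⟨hne, -⟩
    exact hne rfl

/-- `α` and `β` differ precisely on `A` and `Aᶜ`. -/
def DiffersExactlyOn {V : Type*} (E : Set (Set V))
    (α β : {α : Set (Set V) // IsTreeVertex E α}) (A : Set V) : Prop :=
  ¬ (A ∈ α.val ↔ A ∈ β.val) ∧ ¬ (Aᶜ ∈ α.val ↔ Aᶜ ∈ β.val) ∧
    ∀ C ∈ E, C ≠ A → C ≠ Aᶜ → (C ∈ α.val ↔ C ∈ β.val)


/-! A vertex `α` in which a cut `A` is `⊆`-minimal is determined by `A`: nestedness forces it to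
be `minVertex E A`, the cuts that contain `A` or properly contain `Aᶜ`. Hence two adjacent
vertices separated by `A` are `minVertex E A` and `minVertex E Aᶜ`, so that edge is the only one
across which membership of `A` changes: every edge is a bridge, and each pair `{A, Aᶜ}` labels
exactly one edge. For connectedness, a cut `A` that is minimal in `α \ β` is minimal in `α`, and
moving from `α = minVertex E A` to `minVertex E Aᶜ` removes `A` from `α \ β` and adds nothing. -/

section StructureTree

variable {V : Type*} {E : Set (Set V)} {α β : Set (Set V)} {A B : Set V}
  {x y z : {α : Set (Set V) // IsTreeVertex E α}}

lemma Nested.subset_cases (h : Nested A B) : A ⊆ Bᶜ ∨ A ⊆ B ∨ Aᶜ ⊆ Bᶜ ∨ Aᶜ ⊆ B := by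
  simpa only [Nested, Set.eq_empty_iff_forall_notMem, Set.subset_def, Set.mem_inter_iff,
    Set.mem_compl_iff, not_and, not_not] using h

structure IsNestedCutSystem (E : Set (Set V)) : Prop where
  ne_empty : ∀ A ∈ E, A ≠ ∅
  ne_univ : ∀ A ∈ E, A ≠ Set.univ
  compl_mem : ∀ A ∈ E, Aᶜ ∈ E
  nested : ∀ A ∈ E, ∀ B ∈ E, Nested A B

namespace IsTreeVertex

lemma compl_mem_iff (hα : IsTreeVertex E α) (hA : A ∈ E) : Aᶜ ∈ α ↔ A ∉ α := by
  rw [hα.2.1 A hA, not_not]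

lemma eq_of_subset (hα : IsTreeVertex E α) (hβ : IsTreeVertex E β) (h : α ⊆ β) : α = β := by
  refine h.antisymm fun B hB => ?_
  by_contra hBα
  exact (hβ.2.1 B (hβ.1 hB)).1 hB (h ((hα.compl_mem_iff (hβ.1 hB)).2 hBα))

lemma minimal_of_minimal_sdiff (hα : IsTreeVertex E α) (hβ : IsTreeVertex E β)
    (h : Minimal (· ∈ α \ β) A) : Minimal (· ∈ α) A :=
  ⟨h.1.1, fun B hB hBA => h.2 ⟨hB, fun hBβ => h.1.2 (hβ.2.2 B hBβ A (hα.1 h.1.1) hBA)⟩ hBA⟩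

end IsTreeVertex

/-- The vertex in which `A` is `⊆`-minimal (`IsNestedCutSystem.eq_minVertex`); the edge labelled
by `{A, Aᶜ}` joins `minVertex E A` to `minVertex E Aᶜ`. -/
def minVertex (E : Set (Set V)) (A : Set V) : Set (Set V) :=
  {B ∈ E | A ⊆ B ∨ Aᶜ ⊂ B}

lemma self_mem_minVertex (hA : A ∈ E) : A ∈ minVertex E A :=
  ⟨hA, Or.inl subset_rfl⟩

lemma mem_minVertex_compl_iff (hBA : B ≠ A) (hBAc : B ≠ Aᶜ) :
    B ∈ minVertex E Aᶜ ↔ B ∈ minVertex E A := by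
  simp only [minVertex, Set.mem_sep_iff, compl_compl, ssubset_iff_subset_ne, ne_comm (b := B),
    hBA, hBAc, Ne, not_false_eq_true, and_true, or_comm]

namespace IsNestedCutSystem

variable (hE : IsNestedCutSystem E)
include hE

lemma minVertex_isTreeVertex (hA : A ∈ E) : IsTreeVertex E (minVertex E A) := by
  refine ⟨fun B hB => hB.1, fun B hB => ?_, fun B hB C hC hBC =>
    ⟨hC, hB.2.imp (·.trans hBC) (·.trans_subset hBC)⟩⟩
  simp only [minVertex, Set.mem_sep_iff, hB, hE.compl_mem B hB, true_and]
  constructor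
  · rintro (h | h) (h' | h')
    · exact hE.ne_empty A hA (Set.eq_empty_of_subset_empty fun x hx => h' hx (h hx))
    · exact h'.2 (Set.compl_subset_compl.2 h)
    · exact h.2 (Set.subset_compl_comm.1 h')
    · exact hE.ne_univ A hA
        (Set.compl_empty_iff.1 (Set.eq_empty_of_subset_empty fun x hx => h'.1 hx (h.1 hx)))
  · rw [not_or]
    rintro ⟨h, h'⟩
    rcases (hE.nested A hA B hB).subset_cases with c | c | c | c
    · exact absurd c h
    · exact Or.inl c
    · exact Or.inl (Set.compl_subset_compl.1 (by_contra fun hn => h' ⟨c, hn⟩))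
    · exact Or.inr ⟨c, fun hBA => h (Set.subset_compl_comm.1 hBA)⟩

lemma eq_minVertex (hα : IsTreeVertex E α) (h : Minimal (· ∈ α) A) : α = minVertex E A := by
  have hA : A ∈ E := hα.1 h.1
  have hAc : Aᶜ ∉ α := (hα.2.1 A hA).1 h.1
  refine hα.eq_of_subset (hE.minVertex_isTreeVertex hA) fun B hB => ⟨hα.1 hB, ?_⟩
  rcases (hE.nested A hA B (hα.1 hB)).subset_cases with c | c | c | c
  · exact absurd (hα.2.2 B hB Aᶜ (hE.compl_mem A hA) (Set.subset_compl_comm.1 c)) hAc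
  · exact Or.inl c
  · exact Or.inl (h.2 hB (Set.compl_subset_compl.1 c))
  · exact Or.inr (ssubset_of_subset_of_ne c (by rintro rfl; exact hAc hB))

end IsNestedCutSystem

namespace DiffersExactlyOn

lemma symm (h : DiffersExactlyOn E x y A) : DiffersExactlyOn E y x A :=
  ⟨fun h' => h.1 h'.symm, fun h' => h.2.1 h'.symm, fun C hC h1 h2 => (h.2.2 C hC h1 h2).symm⟩

lemma compl (h : DiffersExactlyOn E x y A) : DiffersExactlyOn E x y Aᶜ := by
  refine ⟨h.2.1, by rw [compl_compl]; exact h.1, fun C hC h1 h2 => h.2.2 C hC ?_ h1⟩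
  rwa [compl_compl] at h2

lemma adj (h : DiffersExactlyOn E x y A) (hA : A ∈ E) : (structureTree E).Adj x y :=
  ⟨fun hxy => h.1 (hxy ▸ Iff.rfl), A, hA, h.2.2⟩

lemma left_eq_minVertex (hE : IsNestedCutSystem E) (h : DiffersExactlyOn E x y A)
    (hx : A ∈ x.1) : x.1 = minVertex E A := by
  refine hE.eq_minVertex x.2 (x.2.minimal_of_minimal_sdiff y.2
    ⟨⟨hx, fun hy => h.1 (iff_of_true hx hy)⟩, fun B hB hBA => ?_⟩)
  by_cases hBA' : B = A
  · exact hBA'.ge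
  have hBAc : B ≠ Aᶜ := by
    rintro rfl
    exact (x.2.2.1 A (x.2.1 hx)).1 hx hB.1
  exact absurd ((h.2.2 B (x.2.1 hB.1) hBA' hBAc).1 hB.1) hB.2

lemma eq_minVertex (hE : IsNestedCutSystem E) (h : DiffersExactlyOn E x y A) (hx : A ∈ x.1) :
    x.1 = minVertex E A ∧ y.1 = minVertex E Aᶜ :=
  ⟨h.left_eq_minVertex hE hx, h.symm.compl.left_eq_minVertex hE
    ((y.2.compl_mem_iff (x.2.1 hx)).2 fun hy => h.1 (iff_of_true hx hy))⟩

lemma sdiff_ssubset (h : DiffersExactlyOn E x y A) (hx : A ∈ x.1) (hz : A ∉ z.1) :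
    y.1 \ z.1 ⊂ x.1 \ z.1 := by
  have hy : A ∉ y.1 := fun hy => h.1 (iff_of_true hx hy)
  refine ⟨fun C hC => ⟨?_, hC.2⟩, fun hsub => hy (hsub ⟨hx, hz⟩).1⟩
  have hCA : C ≠ A := by
    rintro rfl
    exact hy hC.1
  have hCAc : C ≠ Aᶜ := by
    rintro rfl
    exact hC.2 ((z.2.compl_mem_iff (x.2.1 hx)).2 hz)
  exact (h.2.2 C (y.2.1 hC.1) hCA hCAc).2 hC.1

end DiffersExactlyOn

lemma differsExactlyOn_of_adj (h : (structureTree E).Adj x y) (hA : A ∈ E)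
    (hxy : ¬(A ∈ x.1 ↔ A ∈ y.1)) : DiffersExactlyOn E x y A := by
  obtain ⟨-, B, -, hB⟩ := h
  have hAB : A = B ∨ A = Bᶜ := by
    by_contra! hne
    exact hxy (hB A hA hne.1 hne.2)
  refine ⟨hxy, fun hc => hxy ?_, fun C hC h1 h2 => ?_⟩
  · rw [x.2.2.1 A hA, y.2.2.1 A hA, hc]
  · rcases hAB with rfl | rfl
    · exact hB C hC h1 h2
    · exact hB C hC (by rwa [compl_compl] at h2) h1

lemma eq_minVertex_of_adj (hE : IsNestedCutSystem E) (h : (structureTree E).Adj x y)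
    (hx : A ∈ x.1) (hy : A ∉ y.1) : x.1 = minVertex E A ∧ y.1 = minVertex E Aᶜ :=
  (differsExactlyOn_of_adj h (x.2.1 hx) fun h' => hy (h'.1 hx)).eq_minVertex hE hx

lemma differsExactlyOn_of_eq_minVertex (hE : IsNestedCutSystem E) (hA : A ∈ E)
    (hx : x.1 = minVertex E A) (hy : y.1 = minVertex E Aᶜ) : DiffersExactlyOn E x y A := by
  have hAx : A ∈ x.1 := hx ▸ self_mem_minVertex hA
  have hAcy : Aᶜ ∈ y.1 := hy ▸ self_mem_minVertex (hE.compl_mem A hA)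
  refine ⟨fun h => (y.2.compl_mem_iff hA).1 hAcy (h.1 hAx),
    fun h => (x.2.2.1 A hA).1 hAx (h.2 hAcy), fun C _ h1 h2 => ?_⟩
  rw [hx, hy, mem_minVertex_compl_iff h1 h2]

namespace IsNestedCutSystem

variable (hE : IsNestedCutSystem E)
include hE

lemma nonempty_treeVertex : Nonempty {α : Set (Set V) // IsTreeVertex E α} := by
  rcases E.eq_empty_or_nonempty with rfl | ⟨A, hA⟩
  · exact ⟨⟨∅, by simp [IsTreeVertex]⟩⟩
  · exact ⟨⟨minVertex E A, hE.minVertex_isTreeVertex hA⟩⟩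

theorem structureTree_preconnected (hfin : E.Finite) : (structureTree E).Preconnected := by
  intro x y
  induction hn : (x.1 \ y.1).ncard using Nat.strong_induction_on generalizing x with
  | _ n ih =>
  by_cases hxy : x.1 ⊆ y.1
  · rw [Subtype.ext (x.2.eq_of_subset y.2 hxy)]
  have hfin' : (x.1 \ y.1).Finite := hfin.subset fun B hB => x.2.1 hB.1
  obtain ⟨A, hA⟩ := hfin'.exists_minimal (Set.sdiff_nonempty.2 hxy)
  have hAE : A ∈ E := x.2.1 hA.1.1
  let z : {α : Set (Set V) // IsTreeVertex E α} :=
    ⟨minVertex E Aᶜ, hE.minVertex_isTreeVertex (hE.compl_mem A hAE)⟩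
  have hxz : DiffersExactlyOn E x z A := differsExactlyOn_of_eq_minVertex hE hAE
    (hE.eq_minVertex x.2 (x.2.minimal_of_minimal_sdiff y.2 hA)) rfl
  exact (hxz.adj hAE).reachable.trans
    (ih _ (hn ▸ Set.ncard_lt_ncard (hxz.sdiff_ssubset hA.1.1 hA.1.2) hfin') z rfl)

theorem structureTree_isBridge_of_adj (h : (structureTree E).Adj x y) :
    (structureTree E).IsBridge s(x, y) := by
  obtain ⟨A, hAx, hAy⟩ : ∃ A ∈ x.1, A ∉ y.1 :=
    Set.not_subset.1 fun hsub => h.1 (Subtype.ext (x.2.eq_of_subset y.2 hsub))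
  rw [SimpleGraph.isBridge_iff]
  rintro ⟨p⟩
  obtain ⟨d, -, hdA, hdA'⟩ := p.exists_boundary_dart {z | A ∈ z.1} hAx hAy
  obtain ⟨hd, hde⟩ := SimpleGraph.deleteEdges_adj.1 d.adj
  obtain ⟨hdx, hdy⟩ := eq_minVertex_of_adj hE hd hdA hdA'
  obtain ⟨hx, hy⟩ := eq_minVertex_of_adj hE h hAx hAy
  rw [Subtype.ext (hdx.trans hx.symm), Subtype.ext (hdy.trans hy.symm)] at hde
  exact hde rfl

theorem structureTree_isAcyclic : (structureTree E).IsAcyclic :=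
  SimpleGraph.isAcyclic_iff_forall_adj_isBridge.2 fun _ _ => hE.structureTree_isBridge_of_adj

theorem existsUnique_edge_differsExactlyOn (hA : A ∈ E) :
    ∃! e : Sym2 {α : Set (Set V) // IsTreeVertex E α}, e ∈ (structureTree E).edgeSet ∧
      ∃ x y, e = s(x, y) ∧ DiffersExactlyOn E x y A := by
  let u : {α : Set (Set V) // IsTreeVertex E α} := ⟨minVertex E A, hE.minVertex_isTreeVertex hA⟩
  let v : {α : Set (Set V) // IsTreeVertex E α} :=
    ⟨minVertex E Aᶜ, hE.minVertex_isTreeVertex (hE.compl_mem A hA)⟩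
  have huv : DiffersExactlyOn E u v A := differsExactlyOn_of_eq_minVertex hE hA rfl rfl
  refine ⟨s(u, v), ⟨huv.adj hA, u, v, rfl, huv⟩, ?_⟩
  rintro _ ⟨-, x, y, rfl, hxy⟩
  by_cases hx : A ∈ x.1
  · obtain ⟨hxu, hyv⟩ := hxy.eq_minVertex hE hx
    rw [Subtype.ext (show x.1 = u.1 from hxu), Subtype.ext (show y.1 = v.1 from hyv)]
  · obtain ⟨hyu, hxv⟩ := hxy.symm.eq_minVertex hE ((_root_.not_iff.1 hxy.1).1 hx)
    rw [Subtype.ext (show x.1 = v.1 from hxv), Subtype.ext (show y.1 = u.1 from hyu),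
      Sym2.eq_swap]

end IsNestedCutSystem

end StructureTree

/-- If `E` is a finite nested set of cuts closed under complementation, then the
structure tree is a tree, and for each `A ∈ E` there is exactly one edge whose two
vertices differ precisely on `A` and `Aᶜ`. -/
theorem structureTree_isTree {V : Type*} (E : Set (Set V)) (hfin : E.Finite)
    (hcut : ∀ A ∈ E, A ≠ ∅ ∧ A ≠ Set.univ)
    (hcompl : ∀ A ∈ E, Aᶜ ∈ E)
    (hnested : ∀ A ∈ E, ∀ B ∈ E, Nested A B) :
    (structureTree E).IsTree ∧
      ∀ A ∈ E, ∃! e : Sym2 {α : Set (Set V) // IsTreeVertex E α},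
        e ∈ (structureTree E).edgeSet ∧
          ∃ α β, e = s(α, β) ∧ DiffersExactlyOn E α β A := by
  have hE : IsNestedCutSystem E :=
    ⟨fun A hA => (hcut A hA).1, fun A hA => (hcut A hA).2, hcompl, hnested⟩
  have := hE.nonempty_treeVertex
  exact ⟨⟨⟨hE.structureTree_preconnected hfin⟩, hE.structureTree_isAcyclic⟩,
    fun A hA => hE.existsUnique_edge_differsExactlyOn hA⟩
end

section
/- Let V be a set, let 𝒞 be a finite nested family of subsets of V, let B ∈ 𝒞, and let A be a subset of V that is not nested with B. Then μ(A∩B, 𝒞) + μ(A∩B*, 𝒞) < μ(A, 𝒞), where for a subset S of V, μ(S, 𝒞) denotes the number of elements of 𝒞 that are not nested with S. -/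
/-- `mu S 𝒞` is the number of members of `𝒞` that are not nested with `S`. -/
noncomputable def mu {V : Type*} (S : Set V) (𝒞 : Set (Set V)) : ℕ :=
  {C ∈ 𝒞 | ¬ Nested S C}.ncard

/-!
Every member `C` of `𝒞` is nested with `B`. If `C` is also nested with `A`, then, because `A`
crosses `B`, it is nested with both corners `A ∩ B` and `A ∩ Bᶜ`; and in any case it is nested
with one of the two corners. So the members crossing `A ∩ B` and those crossing `A ∩ Bᶜ` form
disjoint families of members crossing `A`, and neither contains `B`, which crosses `A`.
-/

theorem Set.ncard_add_ncard_lt {α : Type*} {s t u : Set α} (hu : u.Finite) (hst : Disjoint s t)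
    (hsub : s ∪ t ⊂ u) : s.ncard + t.ncard < u.ncard := by
  have hs : s.Finite := hu.subset (subset_union_left.trans hsub.subset)
  have ht : t.Finite := hu.subset (subset_union_right.trans hsub.subset)
  rw [← Set.ncard_union_eq hst hs ht]
  exact Set.ncard_lt_ncard hsub hu

section Nested

variable {V : Type*} {A B C : Set V}

open Set

theorem nested_iff : Nested A B ↔ Disjoint A B ∨ A ⊆ B ∨ B ⊆ A ∨ Aᶜ ⊆ B := by
  simp only [Nested, ← disjoint_iff_inter_eq_empty, disjoint_compl_right_iff_subset,
    disjoint_compl_left_iff_subset]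

theorem nested_compl_left_iff : Nested Aᶜ B ↔ Nested A B := by
  simp only [Nested, compl_compl]
  tauto

theorem nested_compl_right_iff : Nested A Bᶜ ↔ Nested A B := by
  simp only [Nested, compl_compl]
  tauto

theorem Nested.inter_or_inter_compl (hBC : Nested B C) (A : Set V) :
    Nested (A ∩ B) C ∨ Nested (A ∩ Bᶜ) C := by
  simp only [nested_iff] at hBC ⊢
  rcases hBC with h | h | h | h
  · exact .inl (.inl (h.mono_left inter_subset_right))
  · exact .inl (.inr (.inl (inter_subset_right.trans h)))
  · exact .inr (.inl ((disjoint_compl_left_iff_subset.mpr h).mono_left inter_subset_right))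
  · exact .inr (.inr (.inl (inter_subset_right.trans h)))

theorem Nested.inter_of_not_nested (hBC : Nested B C) (hAB : ¬ Nested A B) (hAC : Nested A C) :
    Nested (A ∩ B) C := by
  simp only [nested_iff, not_or] at hAB
  obtain ⟨-, -, hBA, hAB⟩ := hAB
  -- Replacing `C` by `Cᶜ` turns `A ⊆ C` into `Disjoint A Cᶜ` and `Aᶜ ⊆ C` into `Cᶜ ⊆ A`.
  suffices key : ∀ C, Nested B C → Disjoint A C ∨ C ⊆ A → Nested (A ∩ B) C by
    rcases nested_iff.mp hAC with h | h | h | h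
    · exact key C hBC (.inl h)
    · exact nested_compl_right_iff.mp
        (key Cᶜ (nested_compl_right_iff.mpr hBC) (.inl (disjoint_compl_right_iff_subset.mpr h)))
    · exact key C hBC (.inr h)
    · exact nested_compl_right_iff.mp
        (key Cᶜ (nested_compl_right_iff.mpr hBC) (.inr (compl_subset_comm.mp h)))
  rintro C hBC (hAC | hCA)
  · exact nested_iff.mpr (.inl (hAC.mono_left inter_subset_left))
  rcases nested_iff.mp hBC with h | h | h | h
  · exact nested_iff.mpr (.inl (h.mono_left inter_subset_right))
  · exact absurd (h.trans hCA) hBA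
  · exact nested_iff.mpr (.inr (.inr (.inl (subset_inter hCA h))))
  · exact absurd (compl_subset_comm.mp (h.trans hCA)) hAB

end Nested

/-- If `𝒞` is a finite nested family, `B ∈ 𝒞`, and `A` is not nested with `B`, then
`μ(A ∩ B, 𝒞) + μ(A ∩ Bᶜ, 𝒞) < μ(A, 𝒞)`. -/
theorem mu_corners_lt {V : Type*} (𝒞 : Set (Set V)) (h𝒞fin : 𝒞.Finite)
    (h𝒞nested : ∀ C ∈ 𝒞, ∀ D ∈ 𝒞, Nested C D)
    (B : Set V) (hB : B ∈ 𝒞) (A : Set V) (hAB : ¬ Nested A B) :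
    mu (A ∩ B) 𝒞 + mu (A ∩ Bᶜ) 𝒞 < mu A 𝒞 := by
  have hBC : ∀ C ∈ 𝒞, Nested B C := h𝒞nested B hB
  have hABc : ¬ Nested A Bᶜ := by rwa [nested_compl_right_iff]
  refine Set.ncard_add_ncard_lt (h𝒞fin.subset (Set.sep_subset _ _)) ?_ ?_
  · refine Set.disjoint_left.mpr fun C ⟨hC, h₁⟩ ⟨_, h₂⟩ => ?_
    exact ((hBC C hC).inter_or_inter_compl A).elim h₁ h₂
  have hsub : {C ∈ 𝒞 | ¬ Nested (A ∩ B) C} ∪ {C ∈ 𝒞 | ¬ Nested (A ∩ Bᶜ) C} ⊆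
      {C ∈ 𝒞 | ¬ Nested A C} := by
    rintro C (⟨hC, h⟩ | ⟨hC, h⟩)
    · exact ⟨hC, fun hAC => h ((hBC C hC).inter_of_not_nested hAB hAC)⟩
    · exact ⟨hC, fun hAC =>
        h ((nested_compl_left_iff.mpr (hBC C hC)).inter_of_not_nested hABc hAC)⟩
  refine (Set.ssubset_iff_of_subset hsub).mpr ⟨B, ⟨hB, hAB⟩, ?_⟩
  rintro (⟨-, h⟩ | ⟨-, h⟩)
  · exact h (nested_iff.mpr (.inr (.inl Set.inter_subset_right)))
  · exact h (nested_iff.mpr (.inl (disjoint_compl_left.mono_left Set.inter_subset_right)))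
end
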